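/- arXiv:math/0607629 — 2 statements merged into one kernel-verified Lean document; each statement's English description precedes it below -/
import Mathlib

section
/- For f ∈ CHⁿ_Hopf(A,A), the homotopy-G-algebra differential d(f) = π{f} − (−1)^{n−1} f{π} satisfies d_CH(f) = (−1)^{n+1} d(f), where d_CH is the Hopf-Hochschild differential induced from the bar complex differential. Explicitly, ((−1)^{n+1} d f)(a₀ ⊗ ⋯ ⊗ a_{n+2}) = f(a₀a₁ ⊗ a₂ ⊗ ⋯ ⊗ a_{n+2}) + Σ_{i=1}^{n} (−1)ⁱ f(a₀ ⊗ ⋯ ⊗ aᵢa_{i+1} ⊗ ⋯ ⊗ a_{n+2}) + (−1)^{n+1} f(a₀ ⊗ ⋯ ⊗ aₙ ⊗ a_{n+1}a_{n+2}). -/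
open TensorProduct

noncomputable section ModuleAlgebraDeligne

universe u

variable (K A H : Type u)

/-- An `H`-module-algebra structure on `A`: an `H`-action by `K`-linear maps making `A`
an `H`-module, such that multiplication and unit of `A` are `H`-linear
(the Sweedler sum `∑ (b₍₁₎a₁)(b₍₂₎a₂)` is expressed via `Coalgebra.comul`). -/
structure ModAlg [Field K] [Ring A] [Algebra K A] [Ring H] [Bialgebra K H] where
  act : H →ₗ[K] A →ₗ[K] A
  act_one : ∀ a : A, act 1 a = a
  act_mul : ∀ (b c : H) (a : A), act (b * c) a = act b (act c a)
  act_unit : ∀ b : H, act b (1 : A) = (Coalgebra.counit (R := K) b) • (1 : A)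
  act_alg : ∀ (b : H) (a₁ a₂ : A),
    act b (a₁ * a₂) =
      LinearMap.mul' K A
        ((TensorProduct.homTensorHomMap (RingHom.id K) A A A A)
          (TensorProduct.map act act (Coalgebra.comul (R := K) b)) (a₁ ⊗ₜ[K] a₂))

variable [Field K] [Ring A] [Algebra K A] [Ring H] [Bialgebra K H]

/-- The defining formula of the crossed product multiplication on `X = A ⊗ A ⊗ H`:
`(a₁ ⊗ a₁' ⊗ b¹)(a₂ ⊗ a₂' ⊗ b²) = ∑ a₁(b¹₍₁₎a₂) ⊗ (b¹₍₃₎a₂')a₁' ⊗ b¹₍₂₎b²`. -/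
def XMulFormula (act : H →ₗ[K] A →ₗ[K] A)
    (mul : (A ⊗[K] (A ⊗[K] H)) →ₗ[K] (A ⊗[K] (A ⊗[K] H)) →ₗ[K] (A ⊗[K] (A ⊗[K] H))) :
    Prop :=
  ∀ (a₁ a₁' : A) (b₁ : H) (a₂ a₂' : A) (b₂ : H),
    mul (a₁ ⊗ₜ[K] (a₁' ⊗ₜ[K] b₁)) (a₂ ⊗ₜ[K] (a₂' ⊗ₜ[K] b₂)) =
      TensorProduct.map
        (LinearMap.mulLeft K a₁ ∘ₗ act.flip a₂)
        ((TensorProduct.map (LinearMap.mulRight K a₁' ∘ₗ act.flip a₂')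
            (LinearMap.mulRight K b₂)) ∘ₗ (TensorProduct.comm K H H).toLinearMap)
        ((LinearMap.lTensor H (Coalgebra.comul (R := K)) ∘ₗ Coalgebra.comul (R := K)) b₁)

/-- Iterated tensor power `A^{⊗(n+1)}` (so `Tpow K A n` has `n+1` tensor factors),
bundled with its module structure. -/
def TpowAux : ℕ → Σ' (T : Type u) (_ : AddCommGroup T), Module K T
  | 0 => ⟨A, inferInstance, inferInstance⟩
  | n + 1 =>
    letI T := TpowAux n
    letI : AddCommGroup T.1 := T.2.1
    letI : Module K T.1 := T.2.2
    ⟨A ⊗[K] T.1, inferInstance, inferInstance⟩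

/-- `Tpow K A n = A^{⊗(n+1)}`. -/
def Tpow (n : ℕ) : Type u := (TpowAux K A n).1

instance instTpowAuxACG (n : ℕ) : AddCommGroup (TpowAux K A n).1 := (TpowAux K A n).2.1
instance instTpowAuxMod (n : ℕ) : Module K (TpowAux K A n).1 := (TpowAux K A n).2.2
instance (n : ℕ) : AddCommGroup (Tpow K A n) := (TpowAux K A n).2.1
instance (n : ℕ) : Module K (Tpow K A n) := (TpowAux K A n).2.2

/-- Cast between equal tensor powers (identity when `m = n`, junk `0` otherwise). -/
def tmap (m n : ℕ) : Tpow K A m →ₗ[K] Tpow K A n :=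
  if h : m = n then by subst h; exact LinearMap.id else 0

/-- Left multiplication by an element of `A` on the first tensor factor. -/
def lmulL : ∀ n : ℕ, A →ₗ[K] Tpow K A n →ₗ[K] Tpow K A n
  | 0 => LinearMap.mul K A
  | n + 1 =>
    (LinearMap.rTensorHom (R := K) (M := Tpow K A n) (N := A) (P := A)) ∘ₗ
      LinearMap.mul K A

/-- Right multiplication by an element of `A` on the last tensor factor. -/
def rmulL : ∀ n : ℕ, A →ₗ[K] Tpow K A n →ₗ[K] Tpow K A n
  | 0 => (LinearMap.mul K A).flip
  | n + 1 =>
    (LinearMap.lTensorHom (R := K) (M := A) (N := Tpow K A n) (P := Tpow K A n)) ∘ₗ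
      rmulL n

/-- Componentwise action of `H^{⊗(n+1)}` on `A^{⊗(n+1)}` induced by an action of `H` on `A`. -/
def tact (act : H →ₗ[K] A →ₗ[K] A) :
    ∀ n : ℕ, Tpow K H n →ₗ[K] Tpow K A n →ₗ[K] Tpow K A n
  | 0 => act
  | n + 1 =>
    (TensorProduct.homTensorHomMap (RingHom.id K) A (Tpow K A n) A (Tpow K A n)) ∘ₗ
      TensorProduct.map act (tact act n)

/-- Iterated comultiplication `Δⁿ : H → H^{⊗(n+1)}`. -/
def itComul : ∀ n : ℕ, H →ₗ[K] Tpow K H n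
  | 0 => LinearMap.id
  | n + 1 => LinearMap.lTensor H (itComul n) ∘ₗ Coalgebra.comul (R := K)

/-- The action of the pure tensor `a ⊗ a' ⊗ b ∈ X = A ⊗ A ⊗ H` on `A^{⊗(n+1)}`:
`(a ⊗ a' ⊗ b)(a₀ ⊗ ⋯ ⊗ aₙ) = ∑ a b₍₁₎a₀ ⊗ b₍₂₎a₁ ⊗ ⋯ ⊗ b₍ₙ₊₁₎aₙ a'`. -/
def xActP (act : H →ₗ[K] A →ₗ[K] A) (n : ℕ) (a a' : A) (b : H) :
    Tpow K A n →ₗ[K] Tpow K A n :=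
  lmulL K A n a ∘ₗ rmulL K A n a' ∘ₗ tact K A H act n (itComul K H n b)

/-- `X`-linearity (equivariance with respect to all pure tensors of `X = A ⊗ A ⊗ H`)
of a degree-`m` Hopf-Hochschild cochain `g : A^{⊗(m+2)} → A`. -/
def IsXLinear (act : H →ₗ[K] A →ₗ[K] A) (m : ℕ) (g : Tpow K A (m + 1) →ₗ[K] A) : Prop :=
  ∀ (a a' : A) (b : H) (t : Tpow K A (m + 1)),
    g (xActP K A H act (m + 1) a a' b t) = a * act b (g t) * a'

/-- Append an element of `A` as a new last tensor factor. -/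
def appendA : ∀ n : ℕ, A →ₗ[K] Tpow K A n →ₗ[K] Tpow K A (n + 1)
  | 0 => (TensorProduct.mk K A A).flip
  | n + 1 =>
    (LinearMap.lTensorHom (R := K) (M := A) (N := Tpow K A n) (P := Tpow K A (n + 1))) ∘ₗ
      appendA n

/-- The "inner part" `g(1 ⊗ - ⊗ 1) : A^{⊗n} → A` of a cochain `g : A^{⊗(n+2)} → A`. -/
def innerC {n : ℕ} (g : Tpow K A (n + 2) →ₗ[K] A) : Tpow K A n →ₗ[K] A :=
  g ∘ₗ TensorProduct.mk K A (Tpow K A (n + 1)) 1 ∘ₗ appendA K A n 1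

/-- Consume the first `n+1` tensor factors of `A^{⊗(S+n+2)}` using a map `A^{⊗(n+1)} → A`,
leaving the remaining `A^{⊗(S+1)}`. -/
def consume : ∀ n S : ℕ,
    (Tpow K A n →ₗ[K] A) →ₗ[K] (Tpow K A (S + n + 1) →ₗ[K] A ⊗[K] Tpow K A S)
  | 0, S => LinearMap.rTensorHom (R := K) (M := Tpow K A S) (N := A) (P := A)
  | n + 1, S =>
    (TensorProduct.lift.equiv (RingHom.id K) A (Tpow K A (S + n + 1)) (A ⊗[K] Tpow K A S)).toLinearMap ∘ₗ
      (LinearMap.llcomp K A (Tpow K A n →ₗ[K] A)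
          (Tpow K A (S + n + 1) →ₗ[K] A ⊗[K] Tpow K A S) (consume n S)) ∘ₗ
        TensorProduct.lcurry (RingHom.id K) A (Tpow K A n) A

/-- An operadic "entry": a Hopf-Hochschild cochain of degree `m`,
i.e. a linear map `A^{⊗(m+2)} → A`. -/
def Entry : Type u := Σ' m : ℕ, Tpow K A (m + 1) →ₗ[K] A

/-- Total degree of a list of entries. -/
def sumA : List (Entry K A) → ℕ
  | [] => 0
  | e :: l => sumA l + e.1

/-- The block-substitution map underlying the operad structure maps `γ`. -/
def gammaAux : ∀ l : List (Entry K A), Tpow K A (sumA K A l) →ₗ[K] Tpow K A l.length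
  | [] => LinearMap.id
  | ⟨0, _⟩ :: _ => 0
  | ⟨n + 1, g⟩ :: l =>
    LinearMap.lTensor A (gammaAux l) ∘ₗ consume K A n (sumA K A l) (innerC K A g)

/-- The operad structure map `γ(f; g₁, …, g_k)` of the Hopf-Hochschild cochain operad. -/
def gamma (l : List (Entry K A)) (f : Tpow K A (l.length + 1) →ₗ[K] A) :
    Tpow K A (sumA K A l + 1) →ₗ[K] A :=
  f ∘ₗ LinearMap.lTensor A (gammaAux K A l)

/-- `γ(f; g₁, …, g_k)` with degree bookkeeping by casts: `f` has degree `k`,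
the result is regarded as a map on `Tpow K A M = A^{⊗(M+1)}`
(the casts are identities in every intended use, where `l.length = k`
and `M = sumA l + 1`). -/
def gammaD (k : ℕ) (f : Tpow K A (k + 1) →ₗ[K] A) (l : List (Entry K A)) (M : ℕ) :
    Tpow K A M →ₗ[K] A :=
  gamma K A l (f ∘ₗ tmap K A (l.length + 1) (k + 1)) ∘ₗ tmap K A M (sumA K A l + 1)

/-- The identity cochain `Id ∈ C(1)`, `a₀ ⊗ a₁ ⊗ a₂ ↦ a₀a₁a₂`. -/
def idC : Tpow K A 2 →ₗ[K] A :=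
  LinearMap.mul' K A ∘ₗ LinearMap.lTensor A (LinearMap.mul' K A)

/-- `Id` as an entry. -/
def idE : Entry K A := ⟨1, idC K A⟩

/-- The multiplication cochain `π ∈ C(2)`, `a₀ ⊗ a₁ ⊗ a₂ ⊗ a₃ ↦ a₀a₁a₂a₃`. -/
def piC : Tpow K A 3 →ₗ[K] A :=
  LinearMap.mul' K A ∘ₗ
    LinearMap.lTensor A (LinearMap.mul' K A ∘ₗ LinearMap.lTensor A (LinearMap.mul' K A))

/-- The face map `∂ⱼ : A^{⊗(n+2)} → A^{⊗(n+1)}` of the bar complex. -/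
def face : ∀ n j : ℕ, Tpow K A (n + 1) →ₗ[K] Tpow K A n
  | n, 0 => TensorProduct.lift (lmulL K A n)
  | 0, _ + 1 => TensorProduct.lift (lmulL K A 0)
  | n + 1, j + 1 => LinearMap.lTensor A (face n j)

/-- The bar differential `d_n = ∑_{j=0}^n (−1)ʲ ∂ⱼ : A^{⊗(n+2)} → A^{⊗(n+1)}`. -/
def barDiff (n : ℕ) : Tpow K A (n + 1) →ₗ[K] Tpow K A n :=
  ∑ j ∈ Finset.range (n + 1), (-1 : K) ^ j • face K A n j

end ModuleAlgebraDeligne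

noncomputable section HGDefs

universe v

variable (K A : Type v) [Field K] [Ring A] [Algebra K A]

/-- The homotopy-G-algebra differential `d(f) = π{f} − (−1)^{|f|} f{π}` on degree-`n`
Hopf-Hochschild cochains, written out via the operad structure maps and the sign
conventions of Gerstenhaber–Voronov (`|f| = n − 1`). -/
def hgDiff (n : ℕ) (f : Tpow K A (n + 1) →ₗ[K] A) : Tpow K A (n + 2) →ₗ[K] A :=
  (gammaD K A 2 (piC K A) [⟨n, f⟩, idE K A] (n + 2) +
      (-1 : K) ^ (n - 1) • gammaD K A 2 (piC K A) [idE K A, ⟨n, f⟩] (n + 2)) -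
    (-1 : K) ^ (n - 1) •
      ∑ i ∈ Finset.range n, (-1 : K) ^ i •
        gammaD K A n f
          (List.replicate i (idE K A) ++
            ⟨2, piC K A⟩ :: List.replicate (n - 1 - i) (idE K A)) (n + 2)

/-- The cup product `ψ ∪ φ = (−1)^{m+n−1} γ(π; ψ, φ)` of Hopf-Hochschild cochains of
degrees `m` and `n`. -/
def cup (m n : ℕ) (ψ : Tpow K A (m + 1) →ₗ[K] A) (φ : Tpow K A (n + 1) →ₗ[K] A) :
    Tpow K A (m + n + 1) →ₗ[K] A :=
  (-1 : K) ^ (m + n - 1) • gammaD K A 2 (piC K A) [⟨m, ψ⟩, ⟨n, φ⟩] (m + n + 1)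

/-- The brace operation `ψ{φ} = ∑_{i=1}^m (−1)^{(i−1)(n−1)} γ(ψ; Id^{i−1}, φ, Id^{m−i})`
of Hopf-Hochschild cochains of degrees `m` and `n`. -/
def braceOne (m n : ℕ) (ψ : Tpow K A (m + 1) →ₗ[K] A) (φ : Tpow K A (n + 1) →ₗ[K] A) :
    Tpow K A (m + n) →ₗ[K] A :=
  ∑ i ∈ Finset.range m, (-1 : K) ^ ((n - 1) * i) •
    gammaD K A m ψ
      (List.replicate i (idE K A) ++ ⟨n, φ⟩ :: List.replicate (m - 1 - i) (idE K A))
      (m + n)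

/-- The Gerstenhaber bracket `[ψ, φ] = ψ{φ} − (−1)^{(m−1)(n−1)} φ{ψ}`. -/
def bracketC (m n : ℕ) (ψ : Tpow K A (m + 1) →ₗ[K] A) (φ : Tpow K A (n + 1) →ₗ[K] A) :
    Tpow K A (m + n) →ₗ[K] A :=
  braceOne K A m n ψ φ -
    (-1 : K) ^ ((m - 1) * (n - 1)) • (braceOne K A n m φ ψ ∘ₗ tmap K A (m + n) (n + m))

/-- The bracket `[ψ, φ](a₀ ⊗ a₁ ⊗ a₂) = ψ(a₀ ⊗ φ(1 ⊗ a₁ ⊗ 1) ⊗ a₂) − φ(a₀ ⊗ ψ(1 ⊗ a₁ ⊗ 1) ⊗ a₂)`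
on degree-1 Hopf-Hochschild cochains. -/
def bracket1 (ψ φ : Tpow K A 2 →ₗ[K] A) : Tpow K A 2 →ₗ[K] A :=
  ψ ∘ₗ (LinearMap.lTensor A (LinearMap.rTensor A (innerC K A φ)) : Tpow K A 2 →ₗ[K] Tpow K A 2) -
    φ ∘ₗ (LinearMap.lTensor A (LinearMap.rTensor A (innerC K A ψ)) : Tpow K A 2 →ₗ[K] Tpow K A 2)

end HGDefs

/-! An `X`-linear cochain `f` is determined by its inner part: testing `X`-linearity against
`a ⊗ a' ⊗ 1 ∈ X` gives `f (a ⊗ t ⊗ a') = a · f (1 ⊗ t ⊗ 1) · a'`. Consequently the two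
cup-type terms of `π{f}` are the outer faces, `γ(π; f, Id) = f ∘ ∂_{n+1}` and
`γ(π; Id, f) = f ∘ ∂₀`, while for every cochain `γ(f; Id^i, π, Id^{n-1-i}) = f ∘ ∂_{i+1}`,
since substituting `π` multiplies two adjacent tensor factors. The rest is sign bookkeeping. -/

universe w

section TensorPowers

variable {K A : Type w} [Field K] [Ring A] [Algebra K A]

@[simp] lemma tmap_self (n : ℕ) : tmap K A n n = LinearMap.id := by
  simp [tmap]

lemma tmap_succ (m n : ℕ) : tmap K A (m + 1) (n + 1) = (tmap K A m n).lTensor A := by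
  by_cases h : m = n
  · subst h; simp; rfl
  · rw [tmap, tmap, dif_neg h, dif_neg (by omega)]
    exact (LinearMap.lTensor_zero A).symm

lemma tmap_tmul (m n : ℕ) (x : A) (t : Tpow K A m) :
    tmap K A (m + 1) (n + 1) (x ⊗ₜ[K] t : A ⊗[K] Tpow K A m) =
      (x ⊗ₜ[K] tmap K A m n t : A ⊗[K] Tpow K A n) := by
  rw [tmap_succ]; rfl

lemma tmap_comp_tmap {l m : ℕ} (n : ℕ) (h : l = m) :
    tmap K A m n ∘ₗ tmap K A l m = tmap K A l n := by
  subst h; simp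

lemma face_comp_tmap (m n j : ℕ) :
    face K A n j ∘ₗ tmap K A (m + 1) (n + 1) = tmap K A m n ∘ₗ face K A m j := by
  by_cases h : m = n
  · subst h; simp
  · rw [tmap, tmap, dif_neg h, dif_neg (by omega)]; simp

lemma Tpow.induction_on {m : ℕ} {motive : Tpow K A (m + 1) → Prop} (v : Tpow K A (m + 1))
    (zero : motive 0)
    (tmul : ∀ (x : A) (t : Tpow K A m), motive (x ⊗ₜ[K] t : A ⊗[K] Tpow K A m))
    (add : ∀ x y, motive x → motive y → motive (x + y)) : motive v :=
  TensorProduct.induction_on v zero tmul add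

lemma Tpow.linearMap_ext_appendA {m : ℕ} {W : Type*} [AddCommGroup W] [Module K W]
    {g h : Tpow K A (m + 1) →ₗ[K] W}
    (hgh : ∀ (a : A) (t : Tpow K A m), g (appendA K A m a t) = h (appendA K A m a t)) :
    g = h := by
  induction m with
  | zero => exact TensorProduct.ext' fun x y => hgh y x
  | succ m ih =>
    refine TensorProduct.ext' fun x w => ?_
    exact LinearMap.congr_fun (ih (g := g ∘ₗ TensorProduct.mk K A (Tpow K A (m + 1)) x)
      (h := h ∘ₗ TensorProduct.mk K A (Tpow K A (m + 1)) x) fun a t => hgh a (x ⊗ₜ t)) w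

lemma Tpow.linearMap_ext_tmul_appendA_appendA {m : ℕ} {W : Type*} [AddCommGroup W]
    [Module K W] {g h : Tpow K A (m + 3) →ₗ[K] W}
    (hgh : ∀ (a₀ a a' : A) (t : Tpow K A m),
      g (a₀ ⊗ₜ[K] appendA K A (m + 1) a' (appendA K A m a t) : A ⊗[K] Tpow K A (m + 2)) =
        h (a₀ ⊗ₜ[K] appendA K A (m + 1) a' (appendA K A m a t) : A ⊗[K] Tpow K A (m + 2))) :
    g = h := by
  refine TensorProduct.ext' fun a₀ w => LinearMap.congr_fun
    (f := g ∘ₗ TensorProduct.mk K A _ a₀) (g := h ∘ₗ TensorProduct.mk K A _ a₀) ?_ w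
  refine Tpow.linearMap_ext_appendA fun a' u => LinearMap.congr_fun
    (f := g ∘ₗ TensorProduct.mk K A _ a₀ ∘ₗ appendA K A (m + 1) a')
    (g := h ∘ₗ TensorProduct.mk K A _ a₀ ∘ₗ appendA K A (m + 1) a') ?_ u
  exact Tpow.linearMap_ext_appendA fun a t => hgh a₀ a a' t

lemma Tpow.linearMap_ext_tmul_tmul_appendA {m : ℕ} {W : Type*} [AddCommGroup W]
    [Module K W] {g h : Tpow K A (m + 3) →ₗ[K] W}
    (hgh : ∀ (a₀ a₁ a' : A) (t : Tpow K A m),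
      g (a₀ ⊗ₜ[K] (a₁ ⊗ₜ[K] appendA K A m a' t : A ⊗[K] Tpow K A (m + 1)) :
          A ⊗[K] Tpow K A (m + 2)) =
        h (a₀ ⊗ₜ[K] (a₁ ⊗ₜ[K] appendA K A m a' t : A ⊗[K] Tpow K A (m + 1)) :
          A ⊗[K] Tpow K A (m + 2))) :
    g = h := by
  refine TensorProduct.ext' fun a₀ w => LinearMap.congr_fun
    (f := g ∘ₗ TensorProduct.mk K A _ a₀) (g := h ∘ₗ TensorProduct.mk K A _ a₀) ?_ w
  refine TensorProduct.ext' fun a₁ u => LinearMap.congr_fun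
    (f := g ∘ₗ TensorProduct.mk K A _ a₀ ∘ₗ TensorProduct.mk K A (Tpow K A (m + 1)) a₁)
    (g := h ∘ₗ TensorProduct.mk K A _ a₀ ∘ₗ TensorProduct.mk K A (Tpow K A (m + 1)) a₁) ?_ u
  exact Tpow.linearMap_ext_appendA fun a' t => hgh a₀ a₁ a' t

lemma innerC_idC : innerC K A (idC K A) = LinearMap.id := by
  refine LinearMap.ext fun (a : A) => ?_
  change (1 : A) * (a * 1) = a
  simp

lemma innerC_piC : innerC K A (piC K A) = LinearMap.mul' K A := by
  refine TensorProduct.ext' fun (a b : A) => ?_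
  change (1 : A) * (a * (b * 1)) = a * b
  simp

def cat : ∀ m S : ℕ, Tpow K A m →ₗ[K] Tpow K A S →ₗ[K] Tpow K A (S + m + 1)
  | 0, S => TensorProduct.mk K A (Tpow K A S)
  | m + 1, S => TensorProduct.curry
      ((TensorProduct.lift (cat m S)).lTensor A ∘ₗ
        (TensorProduct.assoc K A (Tpow K A m) (Tpow K A S)).toLinearMap)

lemma cat_succ_tmul (m S : ℕ) (x : A) (t : Tpow K A m) (u : Tpow K A S) :
    cat (m + 1) S (x ⊗ₜ[K] t : A ⊗[K] Tpow K A m) u =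
      (x ⊗ₜ[K] cat m S t u : A ⊗[K] Tpow K A (S + m + 1)) := rfl

lemma consume_cat (m S : ℕ) (G : Tpow K A m →ₗ[K] A) (t : Tpow K A m) (u : Tpow K A S) :
    consume K A m S G (cat m S t u) = G t ⊗ₜ[K] u := by
  induction m with
  | zero => rfl
  | succ m ih =>
    induction t using Tpow.induction_on with
    | zero => simp
    | tmul x t => rw [cat_succ_tmul]; exact ih _ t
    | add x y hx hy => simp only [map_add, LinearMap.add_apply, hx, hy, TensorProduct.add_tmul]

lemma tmap_appendA_eq_cat (m : ℕ) (a : A) (t : Tpow K A m) :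
    tmap K A (m + 1) (0 + m + 1) (appendA K A m a t) = cat m 0 t a := by
  induction m with
  | zero => rfl
  | succ m ih =>
    induction t using Tpow.induction_on with
    | zero => simp; rfl
    | tmul x t => exact (tmap_tmul _ _ x _).trans (congrArg (x ⊗ₜ[K] ·) (ih t))
    | add x y hx hy => simp only [map_add, hx, hy]; rfl

lemma tmap_appendA_appendA_eq_cat (m : ℕ) (a a' : A) (t : Tpow K A m) :
    tmap K A (m + 2) (1 + m + 1) (appendA K A (m + 1) a' (appendA K A m a t)) =
      cat m 1 t (a ⊗ₜ[K] a') := by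
  induction m with
  | zero => rfl
  | succ m ih =>
    induction t using Tpow.induction_on with
    | zero => simp; rfl
    | tmul x t => exact (tmap_tmul _ _ x _).trans (congrArg (x ⊗ₜ[K] ·) (ih t))
    | add x y hx hy => simp only [map_add, hx, hy]; rfl

lemma face_zero_tmul (n : ℕ) (a : A) (u : Tpow K A n) :
    face K A n 0 (a ⊗ₜ[K] u : A ⊗[K] Tpow K A n) = lmulL K A n a u := by
  cases n <;> rfl

lemma face_last_appendA_appendA (m : ℕ) (a a' : A) (t : Tpow K A m) :
    face K A (m + 1) (m + 1) (appendA K A (m + 1) a' (appendA K A m a t)) =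
      appendA K A m (a * a') t := by
  induction m with
  | zero => rfl
  | succ m ih =>
    induction t using Tpow.induction_on with
    | zero => simp
    | tmul x t => exact congrArg (x ⊗ₜ[K] ·) (ih t)
    | add x y hx hy => simp only [map_add, hx, hy]

lemma rmulL_appendA (m : ℕ) (a a' : A) (t : Tpow K A m) :
    rmulL K A (m + 1) a' (appendA K A m a t) = appendA K A m (a * a') t := by
  induction m with
  | zero => rfl
  | succ m ih =>
    induction t using Tpow.induction_on with
    | zero => simp
    | tmul x t => exact congrArg (x ⊗ₜ[K] ·) (ih t)
    | add x y hx hy => simp only [map_add, hx, hy]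

lemma consume_one_mul' (S : ℕ) : consume K A 1 S (LinearMap.mul' K A) = face K A (S + 1) 0 :=
  TensorProduct.ext' fun x w => (face_zero_tmul (S + 1) x w).symm

lemma comp_barDiff (n : ℕ) (f : Tpow K A n →ₗ[K] A) :
    f ∘ₗ barDiff K A n = ∑ j ∈ Finset.range (n + 1), (-1 : K) ^ j • (f ∘ₗ face K A n j) := by
  ext v
  simp [barDiff, map_sum]

lemma gammaAux_cons (m : ℕ) (g : Tpow K A (m + 2) →ₗ[K] A) (l : List (Entry K A)) :
    gammaAux K A (⟨m + 1, g⟩ :: l) =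
      (gammaAux K A l).lTensor A ∘ₗ consume K A m (sumA K A l) (innerC K A g) := rfl

lemma gammaAux_idE_cons (l : List (Entry K A)) :
    gammaAux K A (idE K A :: l) = (gammaAux K A l).lTensor A := by
  have hid : consume K A 0 (sumA K A l) LinearMap.id = LinearMap.id := LinearMap.rTensor_id _ _
  change gammaAux K A (⟨0 + 1, idC K A⟩ :: l) = _
  rw [gammaAux_cons, innerC_idC, hid]
  exact LinearMap.comp_id _

lemma sumA_replicate_idE (k : ℕ) : sumA K A (List.replicate k (idE K A)) = k := by
  induction k with
  | zero => rfl
  | succ k ih => exact congrArg (· + 1) ih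

lemma sumA_append (l l' : List (Entry K A)) : sumA K A (l ++ l') = sumA K A l + sumA K A l' := by
  induction l with
  | nil => simp [sumA]
  | cons e l ih => simp only [List.cons_append, sumA, ih]; omega

lemma gammaAux_replicate_idE (k : ℕ) :
    gammaAux K A (List.replicate k (idE K A)) = tmap K A _ _ := by
  induction k with
  | zero => simp; rfl
  | succ k ih =>
    rw [List.replicate_succ, gammaAux_idE_cons, ih]
    exact (tmap_succ _ _).symm

lemma gammaAux_replicate_piC (i j : ℕ) :
    gammaAux K A (List.replicate i (idE K A) ++ ⟨2, piC K A⟩ :: List.replicate j (idE K A)) =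
      tmap K A (j + 1 + i) _ ∘ₗ face K A (j + 1 + i) i ∘ₗ tmap K A _ (j + 1 + i + 1) := by
  induction i with
  | zero =>
    change gammaAux K A ((⟨1 + 1, piC K A⟩ : Entry K A) :: List.replicate j (idE K A)) =
      tmap K A (j + 1) ((List.replicate j (idE K A)).length + 1) ∘ₗ face K A (j + 1) 0 ∘ₗ
        tmap K A (sumA K A (List.replicate j (idE K A)) + 1 + 1) (j + 1 + 1)
    rw [gammaAux_cons, innerC_piC, gammaAux_replicate_idE, consume_one_mul', face_comp_tmap,
      ← LinearMap.comp_assoc, tmap_comp_tmap _ (by rw [sumA_replicate_idE]), ← tmap_succ]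
    rfl
  | succ i ih =>
    rw [List.replicate_succ, List.cons_append, gammaAux_idE_cons, ih, LinearMap.lTensor_comp,
      LinearMap.lTensor_comp, ← tmap_succ, ← tmap_succ]
    rfl

lemma gammaD_replicate_piC (m i j : ℕ) (hij : i + j = m) (f : Tpow K A (m + 2) →ₗ[K] A) :
    gammaD K A (m + 1) f
        (List.replicate i (idE K A) ++ ⟨2, piC K A⟩ :: List.replicate j (idE K A)) (m + 3) =
      f ∘ₗ face K A (m + 2) (i + 1) := by
  have hlen : (List.replicate i (idE K A) ++ ⟨2, piC K A⟩ :: List.replicate j (idE K A)).length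
      = m + 1 := by
    rw [List.length_append, List.length_replicate]
    change i + ((List.replicate j (idE K A)).length + 1) = m + 1
    rw [List.length_replicate]
    omega
  have hsum : sumA K A (List.replicate i (idE K A) ++ ⟨2, piC K A⟩ :: List.replicate j (idE K A))
      = m + 2 := by
    simp only [sumA_append, sumA, sumA_replicate_idE]
    omega
  rw [gammaD, gamma, gammaAux_replicate_piC]
  -- once length and total degree are generalized, every cast is some `tmap k k = id`
  generalize (List.replicate i (idE K A) ++ ⟨2, piC K A⟩ :: List.replicate j (idE K A)).length
    = a at hlen ⊢
  generalize sumA K A (List.replicate i (idE K A) ++ ⟨2, piC K A⟩ :: List.replicate j (idE K A))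
    = b at hsum ⊢
  subst hlen hsum
  rw [show j + 1 + i = m + 1 by omega]
  simp only [tmap_self, LinearMap.id_comp, LinearMap.comp_id]
  rfl

lemma gammaAux_single_tmap_appendA (m : ℕ) (g : Tpow K A (m + 2) →ₗ[K] A) (a : A)
    (t : Tpow K A m) :
    gammaAux K A [⟨m + 1, g⟩] (tmap K A (m + 1) _ (appendA K A m a t)) = innerC K A g t ⊗ₜ[K] a :=
  (congrArg _ (tmap_appendA_eq_cat m a t)).trans
    (congrArg ((gammaAux K A []).lTensor A) (consume_cat m 0 (innerC K A g) t a))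

lemma gammaAux_pair_idE_tmap_appendA_appendA (m : ℕ) (g : Tpow K A (m + 2) →ₗ[K] A)
    (a a' : A) (t : Tpow K A m) :
    gammaAux K A [⟨m + 1, g⟩, idE K A]
        (tmap K A (m + 2) _ (appendA K A (m + 1) a' (appendA K A m a t))) =
      innerC K A g t ⊗ₜ[K] (a ⊗ₜ[K] a' : A ⊗[K] A) := by
  refine (congrArg _ (tmap_appendA_appendA_eq_cat m a a' t)).trans ?_
  refine (congrArg ((gammaAux K A [idE K A]).lTensor A)
    (consume_cat m 1 (innerC K A g) t (a ⊗ₜ[K] a'))).trans ?_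
  rw [gammaAux_idE_cons]
  rfl

lemma gammaD_piC_cochain_idE_apply (m : ℕ) (g : Tpow K A (m + 2) →ₗ[K] A) (a₀ a a' : A)
    (t : Tpow K A m) :
    gammaD K A 2 (piC K A) [⟨m + 1, g⟩, idE K A] (m + 3)
        (a₀ ⊗ₜ[K] appendA K A (m + 1) a' (appendA K A m a t) : A ⊗[K] Tpow K A (m + 2)) =
      a₀ * (innerC K A g t * (a * a')) :=
  calc _ = piC K A (a₀ ⊗ₜ[K] gammaAux K A [⟨m + 1, g⟩, idE K A]
          (tmap K A (m + 2) _ (appendA K A (m + 1) a' (appendA K A m a t)))) :=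
        congrArg (fun w => piC K A ((gammaAux K A [⟨m + 1, g⟩, idE K A]).lTensor A w))
          (tmap_tmul _ _ a₀ _)
    _ = piC K A (a₀ ⊗ₜ[K] (innerC K A g t ⊗ₜ[K] (a ⊗ₜ[K] a' : A ⊗[K] A))) :=
        congrArg (fun w => piC K A (a₀ ⊗ₜ[K] w))
          (gammaAux_pair_idE_tmap_appendA_appendA m g a a' t)
    _ = _ := rfl

lemma gammaD_piC_idE_cochain_apply (m : ℕ) (g : Tpow K A (m + 2) →ₗ[K] A) (a₀ a₁ a' : A)
    (t : Tpow K A m) :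
    gammaD K A 2 (piC K A) [idE K A, ⟨m + 1, g⟩] (m + 3)
        (a₀ ⊗ₜ[K] (a₁ ⊗ₜ[K] appendA K A m a' t : A ⊗[K] Tpow K A (m + 1)) :
          A ⊗[K] Tpow K A (m + 2)) =
      a₀ * (a₁ * (innerC K A g t * a')) :=
  calc _ = piC K A (a₀ ⊗ₜ[K] (a₁ ⊗ₜ[K] gammaAux K A [⟨m + 1, g⟩]
          (tmap K A (m + 1) _ (appendA K A m a' t)))) := by
        refine congrArg (fun w => piC K A ((gammaAux K A [idE K A, ⟨m + 1, g⟩]).lTensor A w))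
          ((tmap_tmul _ _ a₀ _).trans (congrArg (a₀ ⊗ₜ[K] ·) (tmap_tmul _ _ a₁ _))) |>.trans ?_
        rw [gammaAux_idE_cons]
        rfl
    _ = piC K A (a₀ ⊗ₜ[K] (a₁ ⊗ₜ[K] (innerC K A g t ⊗ₜ[K] a'))) :=
        congrArg (fun w => piC K A (a₀ ⊗ₜ[K] (a₁ ⊗ₜ[K] w))) (gammaAux_single_tmap_appendA m g a' t)
    _ = _ := rfl

end TensorPowers

section ModuleAlgebra

variable {K A H : Type w} [Field K] [Ring A] [Algebra K A] [Ring H] [Bialgebra K H]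

lemma ModAlg.act_one_eq_id (M : ModAlg K A H) : M.act 1 = LinearMap.id :=
  LinearMap.ext M.act_one

lemma tact_itComul_one (M : ModAlg K A H) (n : ℕ) :
    tact K A H M.act n (itComul K H n 1) = LinearMap.id := by
  induction n with
  | zero => exact M.act_one_eq_id
  | succ n ih =>
    have hcomul : itComul K H (n + 1) (1 : H) =
        ((1 : H) ⊗ₜ[K] itComul K H n 1 : H ⊗[K] Tpow K H n) := by
      change (itComul K H n).lTensor H (Coalgebra.comul (R := K) (1 : H)) = _
      rw [Bialgebra.comul_one, Algebra.TensorProduct.one_def]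
      rfl
    have htact : tact K A H M.act (n + 1) ((1 : H) ⊗ₜ[K] itComul K H n 1 : H ⊗[K] Tpow K H n) =
        TensorProduct.map (M.act 1) (tact K A H M.act n (itComul K H n 1)) := rfl
    rw [hcomul, htact, ih, M.act_one_eq_id, TensorProduct.map_id]
    rfl

lemma IsXLinear.tmul_appendA {M : ModAlg K A H} {m : ℕ} {f : Tpow K A (m + 2) →ₗ[K] A}
    (hf : IsXLinear K A H M.act (m + 1) f) (a a' : A) (t : Tpow K A m) :
    f (a ⊗ₜ[K] appendA K A m a' t : A ⊗[K] Tpow K A (m + 1)) = a * innerC K A f t * a' := by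
  have hx : xActP K A H M.act (m + 2) a a' 1
      ((1 : A) ⊗ₜ[K] appendA K A m 1 t : A ⊗[K] Tpow K A (m + 1)) =
        (a ⊗ₜ[K] appendA K A m a' t : A ⊗[K] Tpow K A (m + 1)) := by
    simp only [xActP, tact_itComul_one]
    change ((a * 1) ⊗ₜ[K] rmulL K A (m + 1) a' (appendA K A m 1 t) : A ⊗[K] Tpow K A (m + 1)) = _
    rw [rmulL_appendA, mul_one, one_mul]
  have h := hf a a' 1 ((1 : A) ⊗ₜ[K] appendA K A m 1 t : A ⊗[K] Tpow K A (m + 1))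
  rw [hx, M.act_one_eq_id] at h
  exact h

lemma gammaD_piC_cochain_idE {M : ModAlg K A H} {m : ℕ} {f : Tpow K A (m + 2) →ₗ[K] A}
    (hf : IsXLinear K A H M.act (m + 1) f) :
    gammaD K A 2 (piC K A) [⟨m + 1, f⟩, idE K A] (m + 3) = f ∘ₗ face K A (m + 2) (m + 2) := by
  refine Tpow.linearMap_ext_tmul_appendA_appendA fun a₀ a a' t => ?_
  rw [gammaD_piC_cochain_idE_apply]
  change _ = f (a₀ ⊗ₜ[K] face K A (m + 1) (m + 1) (appendA K A (m + 1) a' (appendA K A m a t)) :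
    A ⊗[K] Tpow K A (m + 1))
  rw [face_last_appendA_appendA, hf.tmul_appendA, mul_assoc]

lemma gammaD_piC_idE_cochain {M : ModAlg K A H} {m : ℕ} {f : Tpow K A (m + 2) →ₗ[K] A}
    (hf : IsXLinear K A H M.act (m + 1) f) :
    gammaD K A 2 (piC K A) [idE K A, ⟨m + 1, f⟩] (m + 3) = f ∘ₗ face K A (m + 2) 0 := by
  refine Tpow.linearMap_ext_tmul_tmul_appendA fun a₀ a₁ a' t => ?_
  rw [gammaD_piC_idE_cochain_apply]
  change _ = f ((a₀ * a₁) ⊗ₜ[K] appendA K A m a' t : A ⊗[K] Tpow K A (m + 1))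
  rw [hf.tmul_appendA, mul_assoc, mul_assoc]

end ModuleAlgebra

lemma sum_range_neg_one_pow_smul {R V : Type*} [Ring R] [AddCommGroup V] [Module R V] (m : ℕ)
    (F : ℕ → V) :
    ∑ j ∈ Finset.range (m + 3), (-1 : R) ^ j • F j =
      (-1 : R) ^ (m + 2) • (F (m + 2) + (-1 : R) ^ m • F 0 -
        (-1 : R) ^ m • ∑ i ∈ Finset.range (m + 1), (-1 : R) ^ i • F (i + 1)) := by
  have hsign : (-1 : R) ^ (m + 2) * (-1) ^ m = 1 := by
    rw [← pow_add]
    exact Even.neg_one_pow ⟨m + 1, by ring⟩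
  have hshift : ∑ i ∈ Finset.range (m + 1), (-1 : R) ^ (i + 1) • F (i + 1) =
      -∑ i ∈ Finset.range (m + 1), (-1 : R) ^ i • F (i + 1) := by
    simp only [pow_succ, mul_neg_one, neg_smul, Finset.sum_neg_distrib]
  rw [Finset.sum_range_succ, Finset.sum_range_succ', hshift, smul_sub, smul_add, smul_smul,
    smul_smul, hsign, pow_zero, one_smul, one_smul]
  abel

/-- For `f ∈ CHⁿ_Hopf(A,A)`, the homotopy-G-algebra differential
`d(f) = π{f} − (−1)^{n−1} f{π}` satisfies `d_CH(f) = (−1)^{n+1} d(f)`, where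
`d_CH(f) = f ∘ d^CB` is the Hopf-Hochschild differential induced from the bar complex
differential (explicitly, `d_CH(f)` is the alternating sum of `f` precomposed with the
face maps `∂ⱼ`, `0 ≤ j ≤ n+1`). -/
theorem hopf_hochschild_differential_eq_hg_differential
    {K A H : Type u} [Field K] [Ring A] [Algebra K A] [Ring H] [Bialgebra K H]
    (M : ModAlg K A H) (n : ℕ) (hn : 1 ≤ n)
    (f : Tpow K A (n + 1) →ₗ[K] A) (hf : IsXLinear K A H M.act n f) :
    f ∘ₗ barDiff K A (n + 1) = (-1 : K) ^ (n + 1) • hgDiff K A n f := by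
  obtain ⟨m, rfl⟩ : ∃ m, n = m + 1 := ⟨n - 1, by omega⟩
  have hbrace : ∀ i ∈ Finset.range (m + 1),
      (-1 : K) ^ i • gammaD K A (m + 1) f (List.replicate i (idE K A) ++
          ⟨2, piC K A⟩ :: List.replicate (m + 1 - 1 - i) (idE K A)) (m + 1 + 2) =
        (-1 : K) ^ i • (f ∘ₗ face K A (m + 2) (i + 1)) := fun i hi => by
    rw [gammaD_replicate_piC m i _ (by simp at hi; omega)]
  rw [hgDiff, gammaD_piC_cochain_idE hf, gammaD_piC_idE_cochain hf, Finset.sum_congr rfl hbrace,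
    comp_barDiff, Nat.add_sub_cancel]
  exact sum_range_neg_one_pow_smul m fun j => f ∘ₗ face K A (m + 2) j
end

section
/- The bracket [ψ, φ](a₀ ⊗ a₁ ⊗ a₂) = ψ(a₀ ⊗ φ(1 ⊗ a₁ ⊗ 1) ⊗ a₂) − φ(a₀ ⊗ ψ(1 ⊗ a₁ ⊗ 1) ⊗ a₂) makes CH¹_Hopf(A,A) ∩ ker(d) (the degree-1 Hopf-Hochschild cocycles) into a Lie algebra over K, i.e., the bracket is bilinear, antisymmetric, preserves cocycles, and satisfies the Jacobi identity. -/
open TensorProduct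

/-!
An `X`-linear degree-one cochain `ψ` is determined by its inner part `D = ψ(1 ⊗ - ⊗ 1)`:
taking `b = 1` in `X`-linearity gives `ψ(a₀ ⊗ a₁ ⊗ a₂) = a₀ D(a₁) a₂`, and taking `a = a' = 1`
together with the counit axiom shows that `D` commutes with the `H`-action. Under `ψ ↦ D` the
bracket becomes the commutator of endomorphisms of `A`; it preserves `X`-linearity because
`id ⊗ D ⊗ id` commutes with the action of `X`, and `ψ` is a cocycle exactly when `D` is a
derivation. Closure under the bracket and the Jacobi identity thus reduce to the corresponding
facts for commutators of derivations.
-/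

section Leibniz

variable {R A : Type*} [Semiring R] [Ring A] [Module R A]

def IsLeibniz (D : Module.End R A) : Prop :=
  ∀ a b : A, D (a * b) = a * D b + D a * b

theorem IsLeibniz.commutator {D E : Module.End R A} (hD : IsLeibniz D) (hE : IsLeibniz E) :
    IsLeibniz (D * E - E * D) := by
  intro a b
  simp only [LinearMap.sub_apply, Module.End.mul_apply, hD _ _, hE _ _, map_add]
  noncomm_ring

theorem commutator_jacobi {R : Type*} [Ring R] (x y z : R) :
    (x * y - y * x) * z - z * (x * y - y * x) + ((y * z - z * y) * x - x * (y * z - z * y)) +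
      ((z * x - x * z) * y - y * (z * x - x * z)) = 0 := by
  noncomm_ring

end Leibniz

universe u

section Tpow

variable (K : Type u) {A : Type u} [Field K] [Ring A] [Algebra K A]

-- `Tpow K A 0` is only definitionally `A`, so pure tensors are built once, at the type
-- `Tpow K A n`, to keep the terms that lemmas rewrite syntactically identical.
def pure₃ (a₀ a₁ a₂ : A) : Tpow K A 2 := a₀ ⊗ₜ[K] (a₁ ⊗ₜ[K] a₂)

def pure₄ (a₀ a₁ a₂ a₃ : A) : Tpow K A 3 := a₀ ⊗ₜ[K] (a₁ ⊗ₜ[K] (a₂ ⊗ₜ[K] a₃))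

variable {K}

theorem tpow_two_ext {N : Type*} [AddCommGroup N] [Module K N] {f g : Tpow K A 2 →ₗ[K] N}
    (h : ∀ a₀ a₁ a₂ : A, f (pure₃ K a₀ a₁ a₂) = g (pure₃ K a₀ a₁ a₂)) : f = g :=
  TensorProduct.ext_threefold' h

theorem tpow_three_ext {N : Type*} [AddCommGroup N] [Module K N] {f g : Tpow K A 3 →ₗ[K] N}
    (h : ∀ a₀ a₁ a₂ a₃ : A, f (pure₄ K a₀ a₁ a₂ a₃) = g (pure₄ K a₀ a₁ a₂ a₃)) : f = g :=
  TensorProduct.ext' fun a t => LinearMap.congr_fun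
    (tpow_two_ext (f := f ∘ₗ TensorProduct.mk K A (Tpow K A 2) a)
      (g := g ∘ₗ TensorProduct.mk K A (Tpow K A 2) a) (h a)) t

theorem pure₃_add_mid (a₀ x y a₂ : A) :
    pure₃ K a₀ (x + y) a₂ = pure₃ K a₀ x a₂ + pure₃ K a₀ y a₂ := by
  change (a₀ ⊗ₜ[K] ((x + y) ⊗ₜ[K] a₂) : A ⊗[K] (A ⊗[K] A)) =
    a₀ ⊗ₜ[K] (x ⊗ₜ[K] a₂) + a₀ ⊗ₜ[K] (y ⊗ₜ[K] a₂)
  rw [TensorProduct.add_tmul, TensorProduct.tmul_add]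

theorem pure₃_smul_mid (c : K) (a₀ x a₂ : A) : pure₃ K a₀ (c • x) a₂ = c • pure₃ K a₀ x a₂ := by
  change (a₀ ⊗ₜ[K] ((c • x) ⊗ₜ[K] a₂) : A ⊗[K] (A ⊗[K] A)) = c • a₀ ⊗ₜ[K] (x ⊗ₜ[K] a₂)
  rw [← TensorProduct.smul_tmul', TensorProduct.tmul_smul]

theorem barDiff_two_pure₄ (a₀ a₁ a₂ a₃ : A) :
    barDiff K A 2 (pure₄ K a₀ a₁ a₂ a₃) =
      pure₃ K (a₀ * a₁) a₂ a₃ - pure₃ K a₀ (a₁ * a₂) a₃ + pure₃ K a₀ a₁ (a₂ * a₃) := by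
  simp only [barDiff, Finset.sum_range_succ, Finset.sum_range_zero, zero_add,
    pow_zero, pow_one, neg_one_sq, one_smul, neg_one_smul, ← sub_eq_add_neg]
  rfl

def innerEnd (g : Tpow K A 2 →ₗ[K] A) : Module.End K A := innerC K A g

theorem innerEnd_add (g g' : Tpow K A 2 →ₗ[K] A) :
    innerEnd (g + g') = innerEnd g + innerEnd g' := rfl

theorem innerEnd_smul (c : K) (g : Tpow K A 2 →ₗ[K] A) : innerEnd (c • g) = c • innerEnd g := rfl

theorem innerEnd_bracket1 (ψ φ : Tpow K A 2 →ₗ[K] A) :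
    innerEnd (bracket1 K A ψ φ) = innerEnd ψ * innerEnd φ - innerEnd φ * innerEnd ψ := rfl

end Tpow

section Action

variable {K A H : Type u} [Field K] [Ring A] [Algebra K A] [Ring H] [Bialgebra K H]

variable (K H) in
def counitOuter : H ⊗[K] (H ⊗[K] H) →ₗ[K] H :=
  (TensorProduct.lid K H).toLinearMap ∘ₗ LinearMap.rTensor H Coalgebra.counit ∘ₗ
    LinearMap.lTensor H ((TensorProduct.rid K H).toLinearMap ∘ₗ
      LinearMap.lTensor H Coalgebra.counit)

theorem counitOuter_tmul (b₀ b₁ b₂ : H) :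
    counitOuter K H (b₀ ⊗ₜ[K] (b₁ ⊗ₜ[K] b₂)) =
      Coalgebra.counit (R := K) b₀ • Coalgebra.counit (R := K) b₂ • b₁ := by
  simp only [counitOuter, LinearMap.comp_apply, LinearMap.lTensor_tmul, LinearMap.rTensor_tmul,
    LinearEquiv.coe_coe, TensorProduct.rid_tmul, TensorProduct.lid_tmul]

theorem itComul_one : itComul K H 1 = Coalgebra.comul := by
  change LinearMap.lTensor H LinearMap.id ∘ₗ Coalgebra.comul (R := K) = _
  rw [LinearMap.lTensor_id, LinearMap.id_comp]

theorem itComul_two_apply (b : H) :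
    itComul K H 2 b = LinearMap.lTensor H Coalgebra.comul (Coalgebra.comul (R := K) b) := by
  change LinearMap.lTensor H (itComul K H 1) (Coalgebra.comul (R := K) b) = _
  rw [itComul_one]
  rfl

theorem counitOuter_itComul_two (b : H) : counitOuter K H (itComul K H 2 b) = b := by
  rw [itComul_two_apply, counitOuter, LinearMap.comp_apply, LinearMap.comp_apply,
    ← LinearMap.comp_apply (LinearMap.lTensor H _), ← LinearMap.lTensor_comp]
  have hcomul : ((TensorProduct.rid K H).toLinearMap ∘ₗ LinearMap.lTensor H Coalgebra.counit) ∘ₗ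
      Coalgebra.comul = LinearMap.id := by
    ext u
    simp [Coalgebra.lTensor_counit_comul]
  rw [hcomul, LinearMap.lTensor_id, LinearMap.id_apply, Coalgebra.rTensor_counit_comul]
  simp

theorem tact_two_pure₃_one_one {act : H →ₗ[K] A →ₗ[K] A}
    (hunit : ∀ b : H, act b 1 = Coalgebra.counit (R := K) b • (1 : A)) (h : Tpow K H 2) (x : A) :
    tact K A H act 2 h (pure₃ K 1 x 1) = pure₃ K 1 (act (counitOuter K H h) x) 1 := by
  have key : (tact K A H act 2).flip (pure₃ K 1 x 1) =
      TensorProduct.mk K A (Tpow K A 1) 1 ∘ₗ (TensorProduct.mk K A A).flip 1 ∘ₗ act.flip x ∘ₗ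
        counitOuter K H := by
    refine tpow_two_ext fun b₀ b₁ b₂ => ?_
    change (act b₀ 1 ⊗ₜ[K] (act b₁ x ⊗ₜ[K] act b₂ 1) : A ⊗[K] (A ⊗[K] A)) =
      (1 : A) ⊗ₜ[K] (act (counitOuter K H (b₀ ⊗ₜ[K] (b₁ ⊗ₜ[K] b₂))) x ⊗ₜ[K] (1 : A))
    rw [counitOuter_tmul, hunit, hunit, map_smul, map_smul, LinearMap.smul_apply,
      LinearMap.smul_apply]
    simp only [TensorProduct.smul_tmul', TensorProduct.tmul_smul]
    rw [TensorProduct.smul_tmul, TensorProduct.smul_tmul']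
  exact LinearMap.congr_fun key h

end Action

section XLinear

variable {K A H : Type u} [Field K] [Ring A] [Algebra K A] [Ring H] [Bialgebra K H]

theorem lmulL_rmulL_pure₃ (a a' x y z : A) :
    lmulL K A 2 a (rmulL K A 2 a' (pure₃ K x y z)) = pure₃ K (a * x) y (z * a') := rfl

theorem xActP_two_pure₃_one_one {act : H →ₗ[K] A →ₗ[K] A}
    (hunit : ∀ b : H, act b 1 = Coalgebra.counit (R := K) b • (1 : A)) (a a' : A) (b : H) (x : A) :
    xActP K A H act 2 a a' b (pure₃ K 1 x 1) = pure₃ K a (act b x) a' := by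
  change lmulL K A 2 a (rmulL K A 2 a' (tact K A H act 2 (itComul K H 2 b) (pure₃ K 1 x 1))) = _
  rw [tact_two_pure₃_one_one hunit, counitOuter_itComul_two, lmulL_rmulL_pure₃, mul_one, one_mul]

variable (K) in
def midMap (f : Module.End K A) : Module.End K (Tpow K A 2) :=
  LinearMap.lTensor A (LinearMap.rTensor A f)

theorem midMap_add (f g : Module.End K A) : midMap K (f + g) = midMap K f + midMap K g :=
  tpow_two_ext fun _ _ _ => pure₃_add_mid _ _ _ _

theorem midMap_smul (c : K) (f : Module.End K A) : midMap K (c • f) = c • midMap K f :=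
  tpow_two_ext fun _ _ _ => pure₃_smul_mid _ _ _ _

theorem bracket1_eq_sub (ψ φ : Tpow K A 2 →ₗ[K] A) :
    bracket1 K A ψ φ = ψ ∘ₗ midMap K (innerEnd φ) - φ ∘ₗ midMap K (innerEnd ψ) := rfl

theorem midMap_tact {act : H →ₗ[K] A →ₗ[K] A} {f : Module.End K A}
    (hf : ∀ b x, f (act b x) = act b (f x)) (h : Tpow K H 2) (t : Tpow K A 2) :
    midMap K f (tact K A H act 2 h t) = tact K A H act 2 h (midMap K f t) := by
  have onPure : ∀ x y z : A, midMap K f ∘ₗ (tact K A H act 2).flip (pure₃ K x y z) =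
      (tact K A H act 2).flip (midMap K f (pure₃ K x y z)) := fun x y z =>
    tpow_two_ext fun b₀ b₁ b₂ => by
      change pure₃ K (act b₀ x) (f (act b₁ y)) (act b₂ z) =
        pure₃ K (act b₀ x) (act b₁ (f y)) (act b₂ z)
      rw [hf]
  have key : midMap K f ∘ₗ tact K A H act 2 h = tact K A H act 2 h ∘ₗ midMap K f :=
    tpow_two_ext fun x y z => LinearMap.congr_fun (onPure x y z) h
  exact LinearMap.congr_fun key t

theorem midMap_xActP {act : H →ₗ[K] A →ₗ[K] A} {f : Module.End K A}
    (hf : ∀ b x, f (act b x) = act b (f x)) (a a' : A) (b : H) (t : Tpow K A 2) :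
    midMap K f (xActP K A H act 2 a a' b t) = xActP K A H act 2 a a' b (midMap K f t) := by
  have hl : midMap K f ∘ₗ lmulL K A 2 a = lmulL K A 2 a ∘ₗ midMap K f :=
    tpow_two_ext fun _ _ _ => rfl
  have hr : midMap K f ∘ₗ rmulL K A 2 a' = rmulL K A 2 a' ∘ₗ midMap K f :=
    tpow_two_ext fun _ _ _ => rfl
  change midMap K f (lmulL K A 2 a (rmulL K A 2 a' (tact K A H act 2 (itComul K H 2 b) t))) =
    lmulL K A 2 a (rmulL K A 2 a' (tact K A H act 2 (itComul K H 2 b) (midMap K f t)))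
  rw [← LinearMap.comp_apply (midMap K f), hl, LinearMap.comp_apply,
    ← LinearMap.comp_apply (midMap K f), hr, LinearMap.comp_apply, midMap_tact hf]

namespace IsXLinear

variable {M : ModAlg K A H} {ψ φ : Tpow K A 2 →ₗ[K] A}

-- `IsXLinear K A H M.act 1` is phrased at degree `1 + 1`; this restates it at degree `2`.
theorem apply_xActP (hψ : IsXLinear K A H M.act 1 ψ) (a a' : A) (b : H) (t : Tpow K A 2) :
    ψ (xActP K A H M.act 2 a a' b t) = a * M.act b (ψ t) * a' := hψ a a' b t

theorem apply_pure₃ (hψ : IsXLinear K A H M.act 1 ψ) (a₀ a₁ a₂ : A) :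
    ψ (pure₃ K a₀ a₁ a₂) = a₀ * innerEnd ψ a₁ * a₂ := by
  have h := hψ.apply_xActP a₀ a₂ 1 (pure₃ K 1 a₁ 1)
  rwa [xActP_two_pure₃_one_one M.act_unit, M.act_one, M.act_one] at h

theorem innerEnd_act (hψ : IsXLinear K A H M.act 1 ψ) (b : H) (x : A) :
    innerEnd ψ (M.act b x) = M.act b (innerEnd ψ x) := by
  have h := hψ.apply_xActP 1 1 b (pure₃ K 1 x 1)
  rwa [xActP_two_pure₃_one_one M.act_unit, one_mul, mul_one] at h

theorem eq_zero (hψ : IsXLinear K A H M.act 1 ψ) (h : innerEnd ψ = 0) : ψ = 0 :=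
  tpow_two_ext fun a₀ a₁ a₂ => by
    rw [hψ.apply_pure₃, h, LinearMap.zero_apply, mul_zero, zero_mul, LinearMap.zero_apply]

theorem add (hψ : IsXLinear K A H M.act 1 ψ) (hφ : IsXLinear K A H M.act 1 φ) :
    IsXLinear K A H M.act 1 (ψ + φ) := fun a a' b t => by
  simp only [LinearMap.add_apply, hψ a a' b t, hφ a a' b t, map_add, mul_add, add_mul]

theorem bracket1 (hψ : IsXLinear K A H M.act 1 ψ) (hφ : IsXLinear K A H M.act 1 φ) :
    IsXLinear K A H M.act 1 (_root_.bracket1 K A ψ φ) := fun a a' b t => by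
  change _root_.bracket1 K A ψ φ (xActP K A H M.act 2 a a' b t) = _
  rw [bracket1_eq_sub, LinearMap.sub_apply, LinearMap.sub_apply, LinearMap.comp_apply,
    LinearMap.comp_apply, LinearMap.comp_apply, LinearMap.comp_apply,
    midMap_xActP hφ.innerEnd_act, midMap_xActP hψ.innerEnd_act, hψ.apply_xActP,
    hφ.apply_xActP, map_sub, mul_sub, sub_mul]

theorem apply_barDiff_two (hψ : IsXLinear K A H M.act 1 ψ) (a₀ a₁ a₂ a₃ : A) :
    ψ (barDiff K A 2 (pure₄ K a₀ a₁ a₂ a₃)) =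
      a₀ * (a₁ * innerEnd ψ a₂ + innerEnd ψ a₁ * a₂ - innerEnd ψ (a₁ * a₂)) * a₃ := by
  rw [barDiff_two_pure₄, map_add, map_sub, hψ.apply_pure₃, hψ.apply_pure₃, hψ.apply_pure₃]
  noncomm_ring

theorem comp_barDiff_two_eq_zero_iff (hψ : IsXLinear K A H M.act 1 ψ) :
    ψ ∘ₗ barDiff K A 2 = 0 ↔ IsLeibniz (innerEnd ψ) := by
  constructor
  · intro h a b
    have h' := LinearMap.congr_fun h (pure₄ K 1 a b 1)
    rw [LinearMap.comp_apply, hψ.apply_barDiff_two, one_mul, mul_one,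
      LinearMap.zero_apply, sub_eq_zero] at h'
    exact h'.symm
  · intro h
    refine tpow_three_ext fun a₀ a₁ a₂ a₃ => ?_
    rw [LinearMap.comp_apply, hψ.apply_barDiff_two, h, sub_self, mul_zero, zero_mul,
      LinearMap.zero_apply]

end IsXLinear

end XLinear

section Bracket

variable {K A : Type u} [Field K] [Ring A] [Algebra K A]

theorem bracket1_add_left (ψ ψ' φ : Tpow K A 2 →ₗ[K] A) :
    bracket1 K A (ψ + ψ') φ = bracket1 K A ψ φ + bracket1 K A ψ' φ := by
  simp only [bracket1_eq_sub, innerEnd_add, midMap_add, LinearMap.add_comp, LinearMap.comp_add]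
  abel

theorem bracket1_smul_left (c : K) (ψ φ : Tpow K A 2 →ₗ[K] A) :
    bracket1 K A (c • ψ) φ = c • bracket1 K A ψ φ := by
  simp only [bracket1_eq_sub, innerEnd_smul, midMap_smul, LinearMap.smul_comp,
    LinearMap.comp_smul, smul_sub]

theorem bracket1_antisymm (ψ φ : Tpow K A 2 →ₗ[K] A) :
    bracket1 K A ψ φ = -bracket1 K A φ ψ :=
  (neg_sub _ _).symm

theorem bracket1_add_right (ψ φ φ' : Tpow K A 2 →ₗ[K] A) :
    bracket1 K A ψ (φ + φ') = bracket1 K A ψ φ + bracket1 K A ψ φ' := by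
  rw [bracket1_antisymm, bracket1_add_left, neg_add, ← bracket1_antisymm, ← bracket1_antisymm]

theorem bracket1_smul_right (c : K) (ψ φ : Tpow K A 2 →ₗ[K] A) :
    bracket1 K A ψ (c • φ) = c • bracket1 K A ψ φ := by
  rw [bracket1_antisymm, bracket1_smul_left, bracket1_antisymm φ, smul_neg, neg_neg]

end Bracket

/-- The bracket
`[ψ, φ](a₀ ⊗ a₁ ⊗ a₂) = ψ(a₀ ⊗ φ(1 ⊗ a₁ ⊗ 1) ⊗ a₂) − φ(a₀ ⊗ ψ(1 ⊗ a₁ ⊗ 1) ⊗ a₂)` makes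
the degree-1 Hopf-Hochschild cocycles into a Lie algebra over `K`: the bracket is bilinear,
antisymmetric, preserves (`X`-linear) cocycles, and satisfies the Jacobi identity. -/
theorem degree_one_cocycles_lie_algebra
    {K A H : Type u} [Field K] [Ring A] [Algebra K A] [Ring H] [Bialgebra K H]
    (M : ModAlg K A H) :
    -- defining formula of the bracket
    (∀ (ψ φ : Tpow K A 2 →ₗ[K] A) (a₀ a₁ a₂ : A),
      bracket1 K A ψ φ (a₀ ⊗ₜ[K] (a₁ ⊗ₜ[K] a₂)) =
        ψ (a₀ ⊗ₜ[K] (φ ((1 : A) ⊗ₜ[K] (a₁ ⊗ₜ[K] (1 : A))) ⊗ₜ[K] a₂)) -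
          φ (a₀ ⊗ₜ[K] (ψ ((1 : A) ⊗ₜ[K] (a₁ ⊗ₜ[K] (1 : A))) ⊗ₜ[K] a₂))) ∧
    -- bilinearity
    (∀ ψ ψ' φ : Tpow K A 2 →ₗ[K] A,
      bracket1 K A (ψ + ψ') φ = bracket1 K A ψ φ + bracket1 K A ψ' φ) ∧
    (∀ (c : K) (ψ φ : Tpow K A 2 →ₗ[K] A),
      bracket1 K A (c • ψ) φ = c • bracket1 K A ψ φ) ∧
    (∀ ψ φ φ' : Tpow K A 2 →ₗ[K] A,
      bracket1 K A ψ (φ + φ') = bracket1 K A ψ φ + bracket1 K A ψ φ') ∧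
    (∀ (c : K) (ψ φ : Tpow K A 2 →ₗ[K] A),
      bracket1 K A ψ (c • φ) = c • bracket1 K A ψ φ) ∧
    -- antisymmetry
    (∀ ψ φ : Tpow K A 2 →ₗ[K] A, bracket1 K A ψ φ = -bracket1 K A φ ψ) ∧
    -- the bracket of X-linear cocycles is an X-linear cocycle
    (∀ ψ φ : Tpow K A 2 →ₗ[K] A,
      IsXLinear K A H M.act 1 ψ → IsXLinear K A H M.act 1 φ →
      ψ ∘ₗ barDiff K A 2 = 0 → φ ∘ₗ barDiff K A 2 = 0 →
      IsXLinear K A H M.act 1 (bracket1 K A ψ φ) ∧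
        bracket1 K A ψ φ ∘ₗ barDiff K A 2 = 0) ∧
    -- Jacobi identity
    (∀ ψ φ χ : Tpow K A 2 →ₗ[K] A,
      IsXLinear K A H M.act 1 ψ → IsXLinear K A H M.act 1 φ →
      IsXLinear K A H M.act 1 χ →
      bracket1 K A (bracket1 K A ψ φ) χ + bracket1 K A (bracket1 K A φ χ) ψ +
          bracket1 K A (bracket1 K A χ ψ) φ = 0) := by
  refine ⟨fun _ _ _ _ _ => rfl, bracket1_add_left, bracket1_smul_left, bracket1_add_right,
    bracket1_smul_right, bracket1_antisymm, ?_, ?_⟩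
  · intro ψ φ hψ hφ hdψ hdφ
    have hbr := hψ.bracket1 hφ
    refine ⟨hbr, hbr.comp_barDiff_two_eq_zero_iff.mpr ?_⟩
    rw [innerEnd_bracket1]
    exact (hψ.comp_barDiff_two_eq_zero_iff.mp hdψ).commutator
      (hφ.comp_barDiff_two_eq_zero_iff.mp hdφ)
  · intro ψ φ χ hψ hφ hχ
    refine ((((hψ.bracket1 hφ).bracket1 hχ).add ((hφ.bracket1 hχ).bracket1 hψ)).add
      ((hχ.bracket1 hψ).bracket1 hφ)).eq_zero ?_
    simp only [innerEnd_add, innerEnd_bracket1]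
    exact commutator_jacobi _ _ _
end
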